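/- Let p be a prime with p ≡ 2 (mod 3) (and p odd). Then Σ_{k=0}^{(p+1)/3} (6k−1) (−1/3)_k^3 / k!^3 ≡ p · Σ_{k=0}^{(p+1)/3} (−1/3)_k^2 / (k! (1/3)_k) (mod p^3). -/

import Mathlib

/-!
Both sums telescope. With `P = (-1/3)_n` and `R = (1/3)_n`, the partial sums up to `n` are
`(3n+1)(3n-1)³ P³ / n!³` and `(3n-1)² P² / (n! R)`. For `n = (p+1)/3` we have `3n - 1 = p`,
so the difference is `p³ ((p+2) P³ / n!³ - P² / (n! R))`, and the bracket is a `p`-adic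
integer: `P` is a product of `p`-adic integers, while `n!` and `R = ∏_{j<n} (3j+1)/3` are
`p`-adic units because `n < p` and `3j + 1 ≤ p - 1`.
-/

open Finset

/-- The Pochhammer symbol `(a)_k = a(a+1)⋯(a+k-1)` for rational `a`. -/
def poch (a : ℚ) (k : ℕ) : ℚ := ∏ j ∈ Finset.range k, (a + j)

open Nat

lemma poch_zero (a : ℚ) : poch a 0 = 1 := rfl

lemma poch_succ (a : ℚ) (k : ℕ) : poch a (k + 1) = poch a k * (a + k) :=
  prod_range_succ _ _

lemma sum_six_mul_sub_one_mul_poch_cube (n : ℕ) :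
    ∑ k ∈ range (n + 1), (6 * (k : ℚ) - 1) * poch (-1/3) k ^ 3 / (k ! : ℚ) ^ 3 =
      (3 * n + 1) * (3 * n - 1) ^ 3 * poch (-1/3) n ^ 3 / (n ! : ℚ) ^ 3 := by
  induction n with
  | zero => norm_num [poch_zero]
  | succ n ih =>
    rw [sum_range_succ, ih, poch_succ, factorial_succ]
    push_cast
    field_simp
    ring

lemma sum_poch_sq_div (n : ℕ) :
    ∑ k ∈ range (n + 1), poch (-1/3) k ^ 2 / ((k ! : ℚ) * poch (1/3) k) =
      (3 * n - 1) ^ 2 * poch (-1/3) n ^ 2 / ((n ! : ℚ) * poch (1/3) n) := by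
  induction n with
  | zero => simp [poch_zero]
  | succ n ih =>
    rw [sum_range_succ, ih, poch_succ (-1/3), poch_succ (1/3), factorial_succ]
    push_cast
    field_simp
    ring

lemma sum_sub_mul_sum_eq_cube_mul (n : ℕ) :
    (∑ k ∈ range (n + 1), (6 * (k : ℚ) - 1) * poch (-1/3) k ^ 3 / (k ! : ℚ) ^ 3) -
        (3 * n - 1) * ∑ k ∈ range (n + 1), poch (-1/3) k ^ 2 / ((k ! : ℚ) * poch (1/3) k) =
      (3 * n - 1) ^ 3 * ((3 * n + 1) * poch (-1/3) n ^ 3 / (n ! : ℚ) ^ 3 -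
        poch (-1/3) n ^ 2 / ((n ! : ℚ) * poch (1/3) n)) := by
  rw [sum_six_mul_sub_one_mul_poch_cube, sum_poch_sq_div]
  ring

section Padic

variable {p : ℕ} [Fact p.Prime]

lemma norm_natCast_eq_one_of_pos_of_lt {k : ℕ} (h0 : 0 < k) (hk : k < p) :
    ‖(k : ℚ_[p])‖ = 1 :=
  Padic.norm_natCast_eq_one_iff.2 <|
    (Nat.Prime.coprime_iff_not_dvd Fact.out).2 (Nat.not_dvd_of_pos_of_lt h0 hk)

lemma norm_factorial_eq_one {n : ℕ} (hn : n < p) : ‖(n ! : ℚ_[p])‖ = 1 :=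
  Padic.norm_natCast_eq_one_iff.2 <|
    (Nat.Prime.coprime_iff_not_dvd Fact.out).2 fun h ↦
      hn.not_ge ((Nat.Prime.dvd_factorial Fact.out).1 h)

lemma norm_poch_le_one {a : ℚ} (ha : ‖(a : ℚ_[p])‖ ≤ 1) (k : ℕ) :
    ‖(poch a k : ℚ_[p])‖ ≤ 1 := by
  rw [poch, Rat.cast_prod, norm_prod]
  refine prod_le_one (fun _ _ ↦ norm_nonneg _) fun j _ ↦ ?_
  push_cast
  exact (Padic.nonarchimedean _ _).trans (max_le ha (by exact_mod_cast Padic.norm_int_le_one j))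

lemma norm_three_eq_one (hp : p ≠ 3) : ‖(3 : ℚ_[p])‖ = 1 := by
  exact_mod_cast Padic.norm_natCast_eq_one_iff.2 <|
    (Nat.coprime_primes Fact.out Nat.prime_three).2 hp

lemma norm_poch_neg_third_le_one (hp : p ≠ 3) (k : ℕ) : ‖(poch (-1/3) k : ℚ_[p])‖ ≤ 1 :=
  norm_poch_le_one (by push_cast; simp [norm_three_eq_one hp]) k

lemma norm_poch_third_eq_one {n : ℕ} (hn : 3 * n ≤ p + 1) (hp : p ≠ 3) :
    ‖(poch (1/3) n : ℚ_[p])‖ = 1 := by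
  rw [poch, Rat.cast_prod, norm_prod]
  refine prod_eq_one fun j hj ↦ ?_
  have hj : 3 * j + 1 < p := by rw [mem_range] at hj; omega
  have h : ((1/3 + j : ℚ) : ℚ_[p]) = ((3 * j + 1 : ℕ) : ℚ_[p]) / 3 := by push_cast; ring
  rw [h, norm_div, norm_natCast_eq_one_of_pos_of_lt (by omega) hj, norm_three_eq_one hp, div_one]

lemma norm_poch_cube_div_sub_poch_sq_div_le_one {n : ℕ} (hn : 3 * n ≤ p + 1) (hp : p ≠ 3) :
    ‖(((3 * n + 1 : ℚ) * poch (-1/3) n ^ 3 / (n ! : ℚ) ^ 3 -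
        poch (-1/3) n ^ 2 / ((n ! : ℚ) * poch (1/3) n) : ℚ) : ℚ_[p])‖ ≤ 1 := by
  have hP := norm_poch_neg_third_le_one (p := p) hp n
  have hnp : n < p := by have := (Fact.out : p.Prime).two_le; omega
  have hF : ‖(n ! : ℚ_[p])‖ = 1 := norm_factorial_eq_one hnp
  have hA : ‖(3 * n + 1 : ℚ_[p])‖ ≤ 1 := by exact_mod_cast Padic.norm_int_le_one (3 * n + 1)
  push_cast
  rw [sub_eq_add_neg]
  refine (Padic.nonarchimedean _ _).trans (max_le ?_ ?_)
  · rw [norm_div, norm_mul, norm_pow, norm_pow, hF, one_pow, div_one]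
    exact mul_le_one₀ hA (by positivity) (pow_le_one₀ (norm_nonneg _) hP)
  · rw [norm_neg, norm_div, norm_mul, hF, norm_poch_third_eq_one hn hp, mul_one, div_one, norm_pow]
    exact pow_le_one₀ (norm_nonneg _) hP

end Padic

theorem stmt11_general (p : ℕ) [Fact p.Prime] (hp3 : p % 3 = 2) :
    ‖(((∑ k ∈ Finset.range ((p + 1) / 3 + 1),
          (6 * (k : ℚ) - 1) * poch (-1/3) k ^ 3 / ((k.factorial : ℚ)) ^ 3) -
        ((p : ℚ) *
          ∑ k ∈ Finset.range ((p + 1) / 3 + 1),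
            poch (-1/3) k ^ 2 / ((k.factorial : ℚ) * poch (1/3) k)) : ℚ) : ℚ_[p])‖ ≤
      (p : ℝ) ^ (-3 : ℤ) := by
  set n := (p + 1) / 3
  have hn : 3 * n = p + 1 := by omega
  have hpn : (p : ℚ) = 3 * n - 1 := by
    rw [eq_sub_iff_add_eq]; exact_mod_cast hn.symm
  rw [hpn, sum_sub_mul_sum_eq_cube_mul, ← hpn, Rat.cast_mul, Rat.cast_pow, Rat.cast_natCast,
    norm_mul, Padic.norm_p_pow]
  exact mul_le_of_le_one_right (by positivity)
    (norm_poch_cube_div_sub_poch_sq_div_le_one hn.le (by omega))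

theorem stmt11 (p : ℕ) [Fact p.Prime] (hodd : Odd p) (hp3 : p % 3 = 2) :
    ‖(((∑ k ∈ Finset.range ((p + 1) / 3 + 1),
          (6 * (k : ℚ) - 1) * poch (-1/3) k ^ 3 / ((k.factorial : ℚ)) ^ 3) -
        ((p : ℚ) *
          ∑ k ∈ Finset.range ((p + 1) / 3 + 1),
            poch (-1/3) k ^ 2 / ((k.factorial : ℚ) * poch (1/3) k)) : ℚ) : ℚ_[p])‖ ≤
      (p : ℝ) ^ (-3 : ℤ) :=
  stmt11_general p hp3
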